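/- If each f_n commutes with f, each f_n is feeble open and surjective, and Σ_{n=1}^∞ D(f_n, f) < ∞, then (X, f) is sensitive if and only if (X, F) is sensitive, where (X, F) is sensitive means: there exists δ > 0 such that for every nonempty open set U ⊆ X there exists n ∈ ℕ with diam(ω_n(U)) > δ. -/

import Mathlib

/-!
Since every `f_n` commutes with `f`, the segment `f_{N+m} ∘ ⋯ ∘ f_{N+1}` is uniformly within
the tail `∑_{k>N} D(f_k, f)` of `f^m`; as the series converges, for large `N` the map
`ω_{N+m} = (f_{N+m} ∘ ⋯ ∘ f_{N+1}) ∘ ω_N` is uniformly close to `f^m ∘ ω_N = ω_N ∘ f^m`.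
If `f` is sensitive, apply this to the open set `interior (ω_N U)`, nonempty because `ω_N` is
feeble open. If `F` is sensitive, shrink `U` so that `ω_0, …, ω_N` do not expand it; then `U`
is expanded by some `ω_{N+m}` with `m ≥ 1`, hence by `ω_N ∘ f^m`, and uniform continuity of
`ω_N` forces `f^m U` to be large.
-/

open Filter Metric Set

noncomputable def supD {X : Type*} [MetricSpace X] (g h : X → X) : ℝ :=
  ⨆ x, dist (g x) (h x)

def omega {X : Type*} (fn : ℕ → X → X) : ℕ → X → X
  | 0 => id
  | k + 1 => fn (k + 1) ∘ omega fn k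

def omegaSeg {X : Type*} (fn : ℕ → X → X) (n : ℕ) : ℕ → X → X
  | 0 => id
  | k + 1 => fn (n + k + 1) ∘ omegaSeg fn n k

open Topology

section

variable {X Y : Type*}

def IsFeebleOpen [TopologicalSpace X] [TopologicalSpace Y] (g : X → Y) : Prop :=
  ∀ U : Set X, IsOpen U → U.Nonempty → (interior (g '' U)).Nonempty

def IsSensitiveWith [PseudoMetricSpace X] (g : ℕ → X → X) (δ : ℝ) : Prop :=
  ∀ U : Set X, IsOpen U → U.Nonempty → ∃ n : ℕ, 1 ≤ n ∧ δ < diam (g n '' U)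

theorem isFeebleOpen_id [TopologicalSpace X] : IsFeebleOpen (id : X → X) := fun U hU hne => by
  rwa [image_id, hU.interior_eq]

theorem IsFeebleOpen.comp {Z : Type*} [TopologicalSpace X] [TopologicalSpace Y]
    [TopologicalSpace Z] {g : Y → Z} {h : X → Y} (hg : IsFeebleOpen g) (hh : IsFeebleOpen h) :
    IsFeebleOpen (g ∘ h) := fun U hU hne =>
  (hg _ isOpen_interior (hh U hU hne)).mono <|
    interior_mono <| by rw [image_comp]; exact image_mono interior_subset

theorem supD_nonneg [MetricSpace X] (g h : X → X) : 0 ≤ supD g h :=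
  Real.iSup_nonneg fun _ => dist_nonneg

theorem dist_le_supD [MetricSpace X] [CompactSpace X] {g h : X → X} (hg : Continuous g)
    (hh : Continuous h) (x : X) : dist (g x) (h x) ≤ supD g h :=
  le_ciSup (f := fun x => dist (g x) (h x)) (isCompact_range (by fun_prop)).bddAbove x

theorem diam_image_le_of_dist_le [PseudoMetricSpace Y] {g h : X → Y} {A : Set X} {t : ℝ}
    (ht : 0 ≤ t) (hA : Bornology.IsBounded (h '' A)) (hgh : ∀ x ∈ A, dist (g x) (h x) ≤ t) :
    diam (g '' A) ≤ diam (h '' A) + 2 * t := by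
  refine diam_le_of_forall_dist_le (by positivity) ?_
  rintro _ ⟨x, hx, rfl⟩ _ ⟨y, hy, rfl⟩
  calc dist (g x) (g y) ≤ dist (g x) (h x) + dist (g y) (h y) + dist (h x) (h y) :=
        dist_triangle4_right _ _ _ _
    _ ≤ t + t + diam (h '' A) := by
        gcongr
        exacts [hgh x hx, hgh y hy,
          dist_le_diam_of_mem hA (mem_image_of_mem h hx) (mem_image_of_mem h hy)]
    _ = diam (h '' A) + 2 * t := by ring

theorem exists_forall_sum_range_add_le {s : ℕ → ℝ} (hs : Summable s) (hnn : ∀ n, 0 ≤ s n)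
    {t : ℝ} (ht : 0 < t) : ∃ N, ∀ m, ∑ k ∈ Finset.range m, s (N + k) ≤ t := by
  obtain ⟨N, hN⟩ := ((tendsto_sum_nat_add s).eventually (eventually_lt_nhds ht)).exists
  refine ⟨N, fun m => ?_⟩
  simp_rw [add_comm N]
  exact (((summable_nat_add_iff N).2 hs).sum_le_tsum _ fun k _ => hnn _).trans hN.le

/-- Near a point of `U`, the finitely many continuous maps `g 0, …, g N` expand nothing
beyond `δ`. -/
theorem IsSensitiveWith.exists_lt_diam [PseudoMetricSpace X] [CompactSpace X] {g : ℕ → X → X}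
    {δ : ℝ} (hsens : IsSensitiveWith g δ) (hδ : 0 < δ) (hg : ∀ n, Continuous (g n)) (N : ℕ)
    {U : Set X} (hU : IsOpen U) (hne : U.Nonempty) : ∃ n, N < n ∧ δ < diam (g n '' U) := by
  obtain ⟨x, hx⟩ := hne
  have hnear : ∀ᶠ y in 𝓝 x, ∀ k ∈ Iic N, dist (g k y) (g k x) < δ / 2 :=
    (finite_Iic N).eventually_all.2 fun k _ =>
      (hg k).continuousAt.eventually (ball_mem_nhds _ (half_pos hδ))
  obtain ⟨V, hVnear, hVopen, hxV⟩ := _root_.mem_nhds_iff.1 hnear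
  obtain ⟨n, -, hn⟩ := hsens (U ∩ V) (hU.inter hVopen) ⟨x, hx, hxV⟩
  refine ⟨n, ?_, hn.trans_le <|
    diam_mono (image_mono inter_subset_left) isBounded_of_compactSpace⟩
  by_contra! hnN
  refine hn.not_ge (diam_le_of_forall_dist_le hδ.le ?_)
  rintro _ ⟨a, ha, rfl⟩ _ ⟨b, hb, rfl⟩
  linarith [dist_triangle_right (g n a) (g n b) (g n x), hVnear ha.2 n hnN, hVnear hb.2 n hnN]

end

section

variable {X : Type*} {f : X → X} {fn : ℕ → X → X}

theorem omega_add (fn : ℕ → X → X) (N : ℕ) :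
    ∀ m, omega fn (N + m) = omegaSeg fn N m ∘ omega fn N
  | 0 => rfl
  | m + 1 => by rw [← add_assoc, omega, omega_add fn N m]; rfl

theorem commute_omega (hcomm : ∀ n, Function.Commute (fn n) f) :
    ∀ n, Function.Commute (omega fn n) f
  | 0 => .id_left
  | n + 1 => (hcomm (n + 1)).comp_left (commute_omega hcomm n)

theorem commute_omegaSeg (hcomm : ∀ n, Function.Commute (fn n) f) (N : ℕ) :
    ∀ m, Function.Commute (omegaSeg fn N m) f
  | 0 => .id_left
  | m + 1 => (hcomm (N + m + 1)).comp_left (commute_omegaSeg hcomm N m)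

theorem continuous_omega [TopologicalSpace X] (hfn : ∀ n, Continuous (fn n)) :
    ∀ n, Continuous (omega fn n)
  | 0 => continuous_id
  | n + 1 => (hfn (n + 1)).comp (continuous_omega hfn n)

theorem isFeebleOpen_omega [TopologicalSpace X] (hfo : ∀ n, IsFeebleOpen (fn n)) :
    ∀ n, IsFeebleOpen (omega fn n)
  | 0 => isFeebleOpen_id
  | n + 1 => (hfo (n + 1)).comp (isFeebleOpen_omega hfo n)

theorem dist_omegaSeg_iterate_le [PseudoMetricSpace X] {ε : ℕ → ℝ}
    (hcomm : ∀ n, Function.Commute (fn n) f) (hε : ∀ n x, dist (fn n x) (f x) ≤ ε n)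
    (N m : ℕ) (x : X) :
    dist (omegaSeg fn N m x) (f^[m] x) ≤ ∑ k ∈ Finset.range m, ε (N + k + 1) := by
  induction m generalizing x with
  | zero => simp [omegaSeg]
  | succ m ih =>
    set y := omegaSeg fn N m x
    calc dist (fn (N + m + 1) y) (f^[m] (f x))
          ≤ dist (fn (N + m + 1) y) (f y) + dist (f y) (f^[m] (f x)) := dist_triangle _ _ _
      _ ≤ ε (N + m + 1) + ∑ k ∈ Finset.range m, ε (N + k + 1) := by
          gcongr
          · exact hε _ _
          · rw [← (commute_omegaSeg hcomm N m).eq x]; exact ih (f x)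
      _ = ∑ k ∈ Finset.range (m + 1), ε (N + k + 1) := by rw [Finset.sum_range_succ, add_comm]

theorem exists_forall_dist_omegaSeg_iterate_le [MetricSpace X] [CompactSpace X]
    (hf : Continuous f) (hfn : ∀ n, Continuous (fn n)) (hcomm : ∀ n, Function.Commute (fn n) f)
    (hsum : Summable fun n => supD (fn (n + 1)) f) {t : ℝ} (ht : 0 < t) :
    ∃ N, ∀ m x, dist (omegaSeg fn N m x) (f^[m] x) ≤ t := by
  obtain ⟨N, hN⟩ := exists_forall_sum_range_add_le hsum (fun n => supD_nonneg _ _) ht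
  exact ⟨N, fun m x =>
    (dist_omegaSeg_iterate_le hcomm (fun n => dist_le_supD (hfn n) hf) N m x).trans (hN m)⟩

variable [PseudoMetricSpace X] [CompactSpace X]

theorem isSensitiveWith_omega_of_iterate (hfo : ∀ n, IsFeebleOpen (fn n)) {δ t : ℝ}
    (hsens : IsSensitiveWith (fun n => f^[n]) δ) (ht : 0 ≤ t) {N : ℕ}
    (hN : ∀ m x, dist (omegaSeg fn N m x) (f^[m] x) ≤ t) :
    IsSensitiveWith (omega fn) (δ - 2 * t) := by
  intro U hU hne
  set V := interior (omega fn N '' U)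
  obtain ⟨m, hm, hδm⟩ := hsens V isOpen_interior (isFeebleOpen_omega hfo N U hU hne)
  refine ⟨N + m, by omega, ?_⟩
  have hclose : diam (f^[m] '' V) ≤ diam (omegaSeg fn N m '' V) + 2 * t :=
    diam_image_le_of_dist_le ht isBounded_of_compactSpace fun x _ =>
      dist_comm (f^[m] x) _ ▸ hN m x
  calc δ - 2 * t < diam (omegaSeg fn N m '' V) := by linarith
    _ ≤ diam (omega fn (N + m) '' U) := by
        refine diam_mono ?_ isBounded_of_compactSpace
        rw [omega_add, image_comp]
        exact image_mono interior_subset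

theorem isSensitiveWith_iterate_of_omega (hfn : ∀ n, Continuous (fn n))
    (hcomm : ∀ n, Function.Commute (fn n) f) {δ : ℝ} (hδ : 0 < δ)
    (hsens : IsSensitiveWith (omega fn) δ) {N : ℕ}
    (hN : ∀ m x, dist (omegaSeg fn N m x) (f^[m] x) ≤ δ / 8) :
    ∃ η > 0, IsSensitiveWith (fun n => f^[n]) η := by
  obtain ⟨η, hη, hω⟩ := Metric.uniformContinuous_iff.1
    (CompactSpace.uniformContinuous_of_continuous (continuous_omega hfn N)) (δ / 4) (by positivity)
  refine ⟨η / 2, half_pos hη, fun U hU hne => ?_⟩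
  obtain ⟨n, hNn, hn⟩ := hsens.exists_lt_diam hδ (continuous_omega hfn) N hU hne
  obtain ⟨m, rfl⟩ := Nat.exists_eq_add_of_le hNn.le
  refine ⟨m, by omega, ?_⟩
  by_contra! hsmall
  have hshrink : diam (omega fn N '' (f^[m] '' U)) ≤ δ / 4 := by
    refine diam_le_of_forall_dist_le (by positivity) ?_
    rintro _ ⟨a, ha, rfl⟩ _ ⟨b, hb, rfl⟩
    exact (hω ((dist_le_diam_of_mem isBounded_of_compactSpace ha hb).trans_lt (by linarith))).le
  have hclose : diam (omegaSeg fn N m '' (omega fn N '' U)) ≤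
      diam (f^[m] '' (omega fn N '' U)) + 2 * (δ / 8) :=
    diam_image_le_of_dist_le (by positivity) isBounded_of_compactSpace fun x _ => hN m x
  have hswap : f^[m] '' (omega fn N '' U) = omega fn N '' (f^[m] '' U) := by
    rw [← image_comp, ← image_comp, ((commute_omega hcomm N).iterate_right m).comp_eq]
  rw [← image_comp, ← omega_add, hswap] at hclose
  linarith

end

theorem stmt12_general {X : Type*} [MetricSpace X] [CompactSpace X]
    (f : X → X) (fn : ℕ → X → X)
    (hf : Continuous f)
    (hfn : ∀ n, Continuous (fn n))
    (hfo : ∀ n, ∀ U : Set X, IsOpen U → U.Nonempty → (interior (fn n '' U)).Nonempty)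
    (hcomm : ∀ n, fn n ∘ f = f ∘ fn n)
    (hsum : Summable fun n => supD (fn (n + 1)) f) :
    (∃ δ > 0, ∀ U : Set X, IsOpen U → U.Nonempty →
        ∃ n : ℕ, 1 ≤ n ∧ δ < Metric.diam (f^[n] '' U)) ↔
    (∃ δ > 0, ∀ U : Set X, IsOpen U → U.Nonempty →
        ∃ n : ℕ, 1 ≤ n ∧ δ < Metric.diam (omega fn n '' U)) := by
  have hcomm' : ∀ n, Function.Commute (fn n) f := fun n =>
    Function.semiconj_iff_comp_eq.2 (hcomm n)
  constructor
  · rintro ⟨δ, hδ, hsens⟩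
    obtain ⟨N, hN⟩ := exists_forall_dist_omegaSeg_iterate_le hf hfn hcomm' hsum
      (by positivity : 0 < δ / 4)
    exact ⟨δ - 2 * (δ / 4), by linarith,
      isSensitiveWith_omega_of_iterate hfo hsens (by positivity) hN⟩
  · rintro ⟨δ, hδ, hsens⟩
    obtain ⟨N, hN⟩ := exists_forall_dist_omegaSeg_iterate_le hf hfn hcomm' hsum
      (by positivity : 0 < δ / 8)
    exact isSensitiveWith_iterate_of_omega hfn hcomm' hδ hsens hN

theorem stmt12 {X : Type*} [MetricSpace X] [CompactSpace X] [Nonempty X]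
    (f : X → X) (fn : ℕ → X → X)
    (hf : Continuous f) (hfsurj : Function.Surjective f)
    (hfn : ∀ n, Continuous (fn n))
    (hsurj : ∀ n, Function.Surjective (fn n))
    (hfo : ∀ n, ∀ U : Set X, IsOpen U → U.Nonempty → (interior (fn n '' U)).Nonempty)
    (hcomm : ∀ n, fn n ∘ f = f ∘ fn n)
    (hsum : Summable fun n => supD (fn (n + 1)) f) :
    (∃ δ > 0, ∀ U : Set X, IsOpen U → U.Nonempty →
        ∃ n : ℕ, 1 ≤ n ∧ δ < Metric.diam (f^[n] '' U)) ↔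
    (∃ δ > 0, ∀ U : Set X, IsOpen U → U.Nonempty →
        ∃ n : ℕ, 1 ≤ n ∧ δ < Metric.diam (omega fn n '' U)) :=
  stmt12_general f fn hf hfn hfo hcomm hsum
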